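/- Let ψ ∈ ℂ^{d_A} ⊗ ℂ^{d_B} be a unit vector and let ρ_A = Tr_B(|ψ⟩⟨ψ|) be its reduced density matrix. Let S_A and S_B be the symmetric projectors on (ℂ^{d_A})^{⊗2} and (ℂ^{d_B})^{⊗2}. Then Tr_B(S_A S_B |ψ⟩⟨ψ|^{⊗2}) = S_A (ρ_A ⊗ ρ_A) S_A, where the partial trace is over both copies of ℂ^{d_B} after the reordering of tensor factors. -/

import Mathlib

/-!
After reordering, ψ ⊗ ψ becomes a vector Φ on (A × A) × (B × B) that is invariant under swapping
both copies at once. Hence on Φ the swap of the B-copies acts as the swap of the A-copies, and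
(S_A ⊗ S_B) Φ = (S_A ⊗ 1) Φ because S_A is idempotent. The partial trace over B then pulls S_A out,
leaving S_A (ρ_A ⊗ ρ_A), and this equals S_A (ρ_A ⊗ ρ_A) S_A since S_A commutes with ρ_A ⊗ ρ_A.
-/

open Matrix BigOperators
open scoped Kronecker ComplexConjugate

noncomputable section

def swapMat (I : Type*) [DecidableEq I] [Fintype I] : Matrix (I × I) (I × I) ℂ :=
  fun p q => if p.1 = q.2 ∧ p.2 = q.1 then 1 else 0

def symProj (I : Type*) [DecidableEq I] [Fintype I] : Matrix (I × I) (I × I) ℂ :=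
  (2⁻¹ : ℂ) • (1 + swapMat I)

def asymProj (I : Type*) [DecidableEq I] [Fintype I] : Matrix (I × I) (I × I) ℂ :=
  (2⁻¹ : ℂ) • (1 - swapMat I)

/-- reordering (1,2,3,4) ↦ (1,3,2,4) of tensor factors -/
def reorder (A B : Type*) : ((A × B) × (A × B)) ≃ ((A × A) × (B × B)) where
  toFun x := ((x.1.1, x.2.1), (x.1.2, x.2.2))
  invFun y := ((y.1.1, y.2.1), (y.1.2, y.2.2))
  left_inv x := rfl
  right_inv y := rfl

/-- |ψ⟩⟨ψ| -/
def outer {I : Type*} (ψ : I → ℂ) : Matrix I I ℂ := fun i j => ψ i * conj (ψ j)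

/-- ψ ⊗ ψ -/
def vec2 {I : Type*} (ψ : I → ℂ) : I × I → ℂ := fun p => ψ p.1 * ψ p.2

/-- |ψ⟩⟨ψ|^{⊗2} -/
def pure2 {I : Type*} (ψ : I → ℂ) : Matrix (I × I) (I × I) ℂ := outer (vec2 ψ)

def unitVec {I : Type*} [Fintype I] (ψ : I → ℂ) : Prop := ∑ i, Complex.normSq (ψ i) = 1

/-- partial trace over the second factor -/
def ptraceB {A B : Type*} [Fintype B] (M : Matrix (A × B) (A × B) ℂ) : Matrix A A ℂ :=
  fun a a' => ∑ b, M (a, b) (a', b)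

/-- reindex an operator on (ℂ^A ⊗ ℂ^B)^{⊗2} as an operator on (ℂ^A)^{⊗2} ⊗ (ℂ^B)^{⊗2} -/
def reindexAB {A B : Type*} (M : Matrix ((A × B) × (A × B)) ((A × B) × (A × B)) ℂ) :
    Matrix ((A × A) × (B × B)) ((A × A) × (B × B)) ℂ :=
  M.submatrix (reorder A B).symm (reorder A B).symm

section Swap

variable {I : Type*} [DecidableEq I] [Fintype I]

lemma swapMat_apply (p q : I × I) : swapMat I p q = if q = p.swap then 1 else 0 := by
  simp only [swapMat, Prod.ext_iff, Prod.fst_swap, Prod.snd_swap, eq_comm (a := p.1),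
    eq_comm (a := p.2), and_comm]

lemma swapMat_apply' (p q : I × I) : swapMat I p q = if p = q.swap then 1 else 0 := by
  simp only [swapMat, Prod.ext_iff, Prod.fst_swap, Prod.snd_swap]

lemma swapMat_mul_apply {n : Type*} (M : Matrix (I × I) n ℂ) (p : I × I) (q : n) :
    (swapMat I * M) p q = M p.swap q := by
  simp [mul_apply, swapMat_apply, ite_mul]

lemma mul_swapMat_apply {n : Type*} [Fintype n] (M : Matrix n (I × I) ℂ) (p : n) (q : I × I) :
    (M * swapMat I) p q = M p q.swap := by
  simp [mul_apply, swapMat_apply', mul_ite]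

lemma swapMat_mul_swapMat : swapMat I * swapMat I = 1 := by
  ext p q
  simp [swapMat_mul_apply, swapMat_apply, one_apply, eq_comm]

lemma symProj_mul_symProj : symProj I * symProj I = symProj I := by
  simp only [symProj, smul_mul_smul_comm, add_mul, mul_add, one_mul, mul_one,
    swapMat_mul_swapMat]
  module

lemma commute_swapMat_kronecker_self (M : Matrix I I ℂ) : Commute (swapMat I) (M ⊗ₖ M) := by
  ext p q
  simp [swapMat_mul_apply, mul_swapMat_apply, mul_comm]

lemma symProj_mul_kronecker_self_mul_symProj (M : Matrix I I ℂ) :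
    symProj I * (M ⊗ₖ M) * symProj I = symProj I * (M ⊗ₖ M) := by
  have h : Commute (symProj I) (M ⊗ₖ M) :=
    ((Commute.one_left _).add_left (commute_swapMat_kronecker_self M)).smul_left _
  rw [mul_assoc, ← h.eq, ← mul_assoc, symProj_mul_symProj]

end Swap

section Kronecker

variable {A B : Type*} [DecidableEq A] [Fintype A] [DecidableEq B] [Fintype B]

lemma symProj_kronecker_one_mulVec_apply (v : (A × A) × (B × B) → ℂ) (x : A × A) (β : B × B) :
    ((symProj A ⊗ₖ (1 : Matrix (B × B) (B × B) ℂ)) *ᵥ v) (x, β) =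
      2⁻¹ * (v (x, β) + v (x.swap, β)) := by
  simp [mulVec, dotProduct, Fintype.sum_prod_type, symProj, one_apply, swapMat_apply, add_mul,
    ite_mul, Finset.sum_add_distrib, mul_add]

lemma one_kronecker_symProj_mulVec_apply (v : (A × A) × (B × B) → ℂ) (x : A × A) (β : B × B) :
    (((1 : Matrix (A × A) (A × A) ℂ) ⊗ₖ symProj B) *ᵥ v) (x, β) =
      2⁻¹ * (v (x, β) + v (x, β.swap)) := by
  simp [mulVec, dotProduct, Fintype.sum_prod_type, symProj, one_apply, swapMat_apply, add_mul,
    ite_mul, Finset.sum_add_distrib, mul_add]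

lemma kronecker_symProj_mulVec_of_swap_invariant {v : (A × A) × (B × B) → ℂ}
    (hv : ∀ x β, v (x.swap, β.swap) = v (x, β)) :
    (symProj A ⊗ₖ symProj B) *ᵥ v = (symProj A ⊗ₖ (1 : Matrix (B × B) (B × B) ℂ)) *ᵥ v := by
  have hB : ((1 : Matrix (A × A) (A × A) ℂ) ⊗ₖ symProj B) *ᵥ v = (symProj A ⊗ₖ 1) *ᵥ v := by
    ext ⟨x, β⟩
    rw [one_kronecker_symProj_mulVec_apply, symProj_kronecker_one_mulVec_apply,
      ← hv x.swap β, Prod.swap_swap]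
  calc (symProj A ⊗ₖ symProj B) *ᵥ v
      = (symProj A ⊗ₖ 1) *ᵥ ((1 ⊗ₖ symProj B) *ᵥ v) := by
        rw [mulVec_mulVec, ← mul_kronecker_mul, Matrix.mul_one, Matrix.one_mul]
    _ = ((symProj A ⊗ₖ 1) * (symProj A ⊗ₖ 1)) *ᵥ v := by rw [hB, mulVec_mulVec]
    _ = (symProj A ⊗ₖ 1) *ᵥ v := by rw [← mul_kronecker_mul, symProj_mul_symProj, Matrix.mul_one]

end Kronecker

section PartialTrace

variable {A B : Type*} [Fintype B]

lemma ptraceB_kronecker_one_mul [Fintype A] [DecidableEq B] (P : Matrix A A ℂ)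
    (M : Matrix (A × B) (A × B) ℂ) :
    ptraceB ((P ⊗ₖ (1 : Matrix B B ℂ)) * M) = P * ptraceB M := by
  ext a a'
  simp only [ptraceB, mul_apply, Fintype.sum_prod_type, kroneckerMap_apply, one_apply, mul_ite,
    mul_one, mul_zero, ite_mul, zero_mul, Finset.sum_ite_eq, Finset.mem_univ, if_true,
    Finset.mul_sum]
  exact Finset.sum_comm

lemma ptraceB_reindexAB_pure2 (ψ : A × B → ℂ) :
    ptraceB (reindexAB (pure2 ψ)) = ptraceB (outer ψ) ⊗ₖ ptraceB (outer ψ) := by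
  ext x y
  simp only [ptraceB, reindexAB, pure2, outer, vec2, kroneckerMap_apply, submatrix_apply,
    Fintype.sum_prod_type, Finset.sum_mul_sum, map_mul]
  refine Finset.sum_congr rfl fun _ _ => Finset.sum_congr rfl fun _ _ => ?_
  dsimp only [reorder, Equiv.coe_fn_symm_mk]
  ring

end PartialTrace

theorem stmt_2_general (dA dB : ℕ) (ψ : Fin dA × Fin dB → ℂ)
    (ρA : Matrix (Fin dA) (Fin dA) ℂ) (hρ : ρA = ptraceB (outer ψ)) :
    ptraceB ((symProj (Fin dA) ⊗ₖ symProj (Fin dB)) * reindexAB (pure2 ψ)) =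
      symProj (Fin dA) * (ρA ⊗ₖ ρA) * symProj (Fin dA) := by
  subst hρ
  set Φ := vec2 ψ ∘ (reorder (Fin dA) (Fin dB)).symm
  have hpure : reindexAB (pure2 ψ) = vecMulVec Φ (star Φ) := rfl
  have hΦ : ∀ x β, Φ (x.swap, β.swap) = Φ (x, β) := fun _ _ => mul_comm _ _
  rw [symProj_mul_kronecker_self_mul_symProj, ← ptraceB_reindexAB_pure2,
    ← ptraceB_kronecker_one_mul, hpure, mul_vecMulVec, mul_vecMulVec,
    kronecker_symProj_mulVec_of_swap_invariant hΦ]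

theorem stmt_2 (dA dB : ℕ) (ψ : Fin dA × Fin dB → ℂ) (hψ : unitVec ψ)
    (ρA : Matrix (Fin dA) (Fin dA) ℂ) (hρ : ρA = ptraceB (outer ψ)) :
    ptraceB ((symProj (Fin dA) ⊗ₖ symProj (Fin dB)) * reindexAB (pure2 ψ)) =
      symProj (Fin dA) * (ρA ⊗ₖ ρA) * symProj (Fin dA) :=
  stmt_2_general dA dB ψ ρA hρ
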